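/- In the Marker variant, for j ≥ 1 and x ∈ X let t_{j+1}(x) ∈ {0, …, l_{j+1}−1} be the unique offset such that x_{m·l_{j+1} − t_{j+1}(x)} ⋯ x_{(m+1)·l_{j+1} − t_{j+1}(x) − 1} ∈ C_{j+1} for all m ∈ ℤ, and let L_j = {x ∈ X : ⌊t_{j+1}(x)/l_j⌋ + 1 ∈ P_j} (the set of points whose C_j-block containing coordinate 0 sits at a permuted position). Then μ(L_j) = ⌊√N_j⌋ / N_j. -/

import Mathlib

open Filter MeasureTheory Topology

namespace EntDim

/-- The left shift `σ` on `A^ℤ`: `(shift x) i = x (i + 1)`. -/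
def shift {A : Type*} (x : ℤ → A) : ℤ → A := fun i => x (i + 1)

/-- The shift by an integer `k`: `(shiftZ k x) i = x (i + k)`, i.e. `σ^k`. -/
def shiftZ {A : Type*} (k : ℤ) (x : ℤ → A) : ℤ → A := fun i => x (i + k)

/-- A subshift: a nonempty closed shift-invariant subset of `A^ℤ`. -/
def IsSubshift {A : Type*} [TopologicalSpace A] (X : Set (ℤ → A)) : Prop :=
  X.Nonempty ∧ IsClosed X ∧ shift '' X = X

/-- `B_n(X)`: the set of words of length `n` occurring in `X`. -/
def wordsOf {A : Type*} (X : Set (ℤ → A)) (n : ℕ) : Set (Fin n → A) :=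
  { w | ∃ x ∈ X, ∀ i : Fin n, w i = x ((i : ℕ) : ℤ) }

/-- `X` is minimal: every orbit is dense in `X`. -/
def IsMinimal {A : Type*} [TopologicalSpace A] (X : Set (ℤ → A)) : Prop :=
  ∀ x ∈ X, X ⊆ closure { z | ∃ k : ℤ, z = shiftZ k x }

/-- `μ` is a shift-invariant Borel probability measure carried by `X`. -/
def IsInvProbOn {A : Type*} [MeasurableSpace A] (μ : Measure (ℤ → A))
    (X : Set (ℤ → A)) : Prop :=
  IsProbabilityMeasure μ ∧ MeasurePreserving shift μ μ ∧ μ X = 1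

/-- The cylinder `[u] = {x ∈ X : x_i = u_i for 0 ≤ i < |u|}` of a finite word `u`. -/
def cylW {A : Type*} (X : Set (ℤ → A)) (u : List A) : Set (ℤ → A) :=
  { x | x ∈ X ∧ ∀ i : Fin u.length, x ((i : ℕ) : ℤ) = u.get i }

/-- The `n`-cylinder `P_n(x) = {y ∈ X : y_i = x_i for 0 ≤ i < n}` of a point `x`. -/
def cylPt {A : Type*} (X : Set (ℤ → A)) (x : ℤ → A) (n : ℕ) : Set (ℤ → A) :=
  { y | y ∈ X ∧ ∀ i : ℕ, i < n → y (i : ℤ) = x (i : ℤ) }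

/-- The first return time `R_n(x) = inf {k ≥ 1 : x_{k+i} = x_i for 0 ≤ i < n}`
(with the junk value `0` if no such `k` exists). -/
noncomputable def retTime {A : Type*} (x : ℤ → A) (n : ℕ) : ℕ :=
  sInf { k : ℕ | 1 ≤ k ∧ ∀ i : ℕ, i < n → x ((k : ℤ) + (i : ℕ)) = x ((i : ℕ) : ℤ) }

/-- The sequence of pairs `(l_j, N_j)`, `j ≥ 1`, with `l_1 = l1`, `N_1 = 2^⌊√l1⌋`,
`l_{j+1} = l_j · N_j` and `N_{j+1} = (⌊√N_j⌋)!`.  (The value at `j = 0` is junk.) -/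
def lN (l1 : ℕ) : ℕ → ℕ × ℕ
  | 0 => (0, 0)
  | 1 => (l1, 2 ^ Nat.sqrt l1)
  | j + 2 => ((lN l1 (j + 1)).1 * (lN l1 (j + 1)).2, Nat.factorial (Nat.sqrt (lN l1 (j + 1)).2))

/-- The length `l_j` of the words of `C_j`. -/
def lseq (l1 j : ℕ) : ℕ := (lN l1 j).1

/-- The cardinality `N_j` of `C_j`. -/
def Nseq (l1 j : ℕ) : ℕ := (lN l1 j).2

/-- `i ∈ P_j = {2} ∪ {m² : 2 ≤ m ≤ ⌊√N⌋}` (1-based position `i`, where `N = N_j`):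
the permuted (unstable) positions. -/
def PermutedIdx (N i : ℕ) : Prop :=
  i = 2 ∨ ∃ m : ℕ, 2 ≤ m ∧ m ≤ Nat.sqrt N ∧ i = m ^ 2

/-- The data of the Construction: a positive integer `l1` and ordered lists
`C j` (`j ≥ 1`) of distinct binary words (`C 0` is irrelevant), where `C 1` consists of
`N_1 = 2^⌊√l1⌋` words of length `l1`, `C j` consists of `N_j` words of length `l_j`, and
`C (j+1)` is the set of all concatenations of the words of `C j` reordered by a
permutation preserving `P_j` and fixing every position outside `P_j`. -/
structure Construction where
  l1 : ℕ
  hl1 : 0 < l1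
  C : ℕ → List (List Bool)
  nodup : ∀ j, 1 ≤ j → (C j).Nodup
  length_eq : ∀ j, 1 ≤ j → (C j).length = Nseq l1 j
  wordLength : ∀ j, 1 ≤ j → ∀ w ∈ C j, w.length = lseq l1 j
  mem_succ : ∀ j, 1 ≤ j → ∀ w : List Bool,
    w ∈ C (j + 1) ↔
      ∃ τ : Equiv.Perm (Fin (C j).length),
        (∀ i : Fin (C j).length, ¬ PermutedIdx (Nseq l1 j) ((i : ℕ) + 1) → τ i = i) ∧
        (∀ i : Fin (C j).length, PermutedIdx (Nseq l1 j) ((i : ℕ) + 1) →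
            PermutedIdx (Nseq l1 j) ((τ i : ℕ) + 1)) ∧
        w = (List.ofFn fun i : Fin (C j).length => (C j).get (τ i)).flatten

/-- The subshift `X` of the Construction: all `x ∈ {0,1}^ℤ` each of whose finite
subwords occurs as a subword of some word in some `C j`. -/
def Construction.space (c : Construction) : Set (ℤ → Bool) :=
  { x | ∀ (a : ℤ) (n : ℕ), ∃ j, 1 ≤ j ∧ ∃ w ∈ c.C j,
      (List.ofFn fun i : Fin n => x (a + (i : ℕ))) <:+: w }

/-- The offset `t_j(x) ∈ {0, …, l_j − 1}` of the decomposition of `x` into `C j`-words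
(defined as an infimum; it is unique in the Marker variant). -/
noncomputable def Construction.tOffset (c : Construction) (j : ℕ) (x : ℤ → Bool) : ℕ :=
  sInf { t : ℕ | t < lseq c.l1 j ∧ ∀ m : ℤ,
    (List.ofFn fun i : Fin (lseq c.l1 j) =>
      x (m * (lseq c.l1 j : ℤ) - (t : ℤ) + (i : ℕ))) ∈ c.C j }

/-- The Marker variant: every word of `C 1` begins with `001`, and `00` occurs in each
word of `C 1` only as its prefix. -/
structure MarkerConstruction extends Construction where
  marker_prefix : ∀ w ∈ C 1, [false, false, true] <+: w
  marker_unique : ∀ w ∈ C 1, ∀ n : ℕ, [false, false] <+: w.drop n → n = 0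

/-!
In the Marker variant the offsets `t_J(x)` are unique: the marker `001` can only sit at the start
of a `C 1`-block, which fixes `t_1`, and since position `1 ∉ P_J` every word of `C (J+1)` begins
with the first word of `C J`, which occurs at no other block position, so `t_J mod l_J` determines
`t_{J+1}`. Existence follows by reading long windows of `x` inside words of some `C k` and
letting the window grow (pigeonhole on the finitely many offsets). Hence `X` is partitioned into
the `l_{j+1}` sets `{t_{j+1} = t}`, which the shift permutes cyclically, so each has measure
`1 / l_{j+1}`; `L_j` is the union of those with `⌊t / l_j⌋ + 1 ∈ P_j`, and there are
`⌊√N_j⌋ · l_j` of them.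
-/

section Sequences

variable {l1 : ℕ}

lemma lseq_succ {j : ℕ} (hj : 1 ≤ j) : lseq l1 (j + 1) = lseq l1 j * Nseq l1 j := by
  obtain ⟨k, rfl⟩ := Nat.exists_eq_add_of_le' hj
  rfl

lemma Nseq_succ {j : ℕ} (hj : 1 ≤ j) : Nseq l1 (j + 1) = (Nat.sqrt (Nseq l1 j)).factorial := by
  obtain ⟨k, rfl⟩ := Nat.exists_eq_add_of_le' hj
  rfl

lemma Nseq_pos {j : ℕ} (hj : 1 ≤ j) : 0 < Nseq l1 j := by
  induction j, hj using Nat.le_induction with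
  | base => exact Nat.two_pow_pos _
  | succ n hn _ => rw [Nseq_succ hn]; exact Nat.factorial_pos _

lemma lseq_pos (hl1 : 0 < l1) {j : ℕ} (hj : 1 ≤ j) : 0 < lseq l1 j := by
  induction j, hj using Nat.le_induction with
  | base => exact hl1
  | succ n hn ih => rw [lseq_succ hn]; exact Nat.mul_pos ih (Nseq_pos hn)

lemma lseq_dvd {j k : ℕ} (hj : 1 ≤ j) (hjk : j ≤ k) : lseq l1 j ∣ lseq l1 k := by
  induction k, hjk using Nat.le_induction with
  | base => rfl
  | succ n hn ih => rw [lseq_succ (hj.trans hn)]; exact ih.mul_right _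

lemma lseq_eq_of_Nseq_eq_one {j : ℕ} (hj : 1 ≤ j) (hN : Nseq l1 j = 1) {k : ℕ} (hjk : j ≤ k) :
    lseq l1 k = lseq l1 j ∧ Nseq l1 k = 1 := by
  induction k, hjk using Nat.le_induction with
  | base => exact ⟨rfl, hN⟩
  | succ n hn ih =>
    rw [lseq_succ (hj.trans hn), Nseq_succ (hj.trans hn), ih.1, ih.2]
    simp

end Sequences

lemma exists_eq_mul_add_lt (u : ℤ) {N : ℕ} (hN : 0 < N) :
    ∃ (M : ℤ) (r : ℕ), r < N ∧ u = M * N + r := by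
  have hN' : (0 : ℤ) < N := by exact_mod_cast hN
  refine ⟨u / N, (u % N).toNat, by have := Int.emod_lt_of_pos u hN'; omega, ?_⟩
  rw [Int.toNat_of_nonneg (Int.emod_nonneg u hN'.ne')]
  linear_combination -(Int.mul_ediv_add_emod u N)

lemma eq_of_dvd_sub {L t t' : ℕ} (ht : t < L) (ht' : t' < L) (h : (L : ℤ) ∣ t' - t) : t = t' :=
  (Nat.modEq_iff_dvd.mpr h).eq_of_lt_of_lt ht ht'

lemma pair_prefix_drop {α : Type*} {w : List α} {r : ℕ} (h : r + 1 < w.length) :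
    [w[r], w[r + 1]] <+: w.drop r := by
  rw [List.drop_eq_getElem_cons (by omega), List.drop_eq_getElem_cons h]
  exact ⟨_, rfl⟩

section Chunks

variable {α : Type*}

def chunk (l : ℕ) (w : List α) (r : ℕ) : List α := (w.drop (r * l)).take l

lemma chunk_infix {l r : ℕ} {w : List α} : chunk l w r <:+: w :=
  (List.take_prefix _ _).isInfix.trans (List.drop_suffix _ _).isInfix

lemma chunk_flatten {L : List (List α)} {l : ℕ} (h : ∀ u ∈ L, u.length = l) {r : ℕ}
    (hr : r < L.length) : chunk l L.flatten r = L[r] := by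
  induction L generalizing r with
  | nil => simp at hr
  | cons u T ih =>
    have hu : u.length = l := h u List.mem_cons_self
    cases r with
    | zero => simp [chunk, ← hu]
    | succ r =>
      have hdrop : (u ++ T.flatten).drop (l + r * l) = T.flatten.drop (r * l) := by
        rw [← hu, List.drop_length_add_append]
      rw [chunk, List.flatten_cons, Nat.succ_mul, Nat.add_comm, hdrop]
      exact ih (fun v hv => h v (List.mem_cons_of_mem _ hv)) (by simpa using hr)

lemma chunk_chunk {w : List α} {l e r s : ℕ} (hs : s < e) :
    chunk l (chunk (e * l) w r) s = chunk l w (r * e + s) := by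
  have hmin : min l (e * l - s * l) = l :=
    min_eq_left (Nat.le_sub_of_add_le (by nlinarith))
  simp only [chunk, List.drop_take, List.drop_drop, List.take_take, hmin]
  congr 2
  ring

lemma take_drop_of_forall_chunk {P : List α → Prop} {l : ℕ} {pre v suf : List α}
    (hP : ∀ q, (q + 1) * l ≤ (pre ++ v ++ suf).length → P (chunk l (pre ++ v ++ suf) q))
    {o : ℕ} (ho : o + l ≤ v.length) (hdvd : l ∣ pre.length + o) : P ((v.drop o).take l) := by
  obtain ⟨q, hq⟩ := hdvd
  have hlen : (q + 1) * l ≤ (pre ++ v ++ suf).length := by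
    simp only [List.length_append]; nlinarith
  have := hP q hlen
  rwa [chunk, mul_comm, ← hq, List.append_assoc, List.drop_length_add_append,
    List.drop_append_of_le_length (by omega), List.take_append_of_le_length (by simp; omega)]
    at this

end Chunks

section Blocks

def blockOf (x : ℤ → Bool) (l : ℕ) (p : ℤ) : List Bool := List.ofFn fun i : Fin l => x (p + (i : ℕ))

variable (x : ℤ → Bool)

@[simp] lemma length_blockOf (l : ℕ) (p : ℤ) : (blockOf x l p).length = l := by
  simp [blockOf]

@[simp] lemma getElem_blockOf (l : ℕ) (p : ℤ) (i : ℕ) (hi : i < (blockOf x l p).length) :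
    (blockOf x l p)[i] = x (p + i) := by
  simp [blockOf]

lemma take_drop_blockOf {L l o : ℕ} (p : ℤ) (h : o + l ≤ L) :
    ((blockOf x L p).drop o).take l = blockOf x l (p + o) := by
  apply List.ext_getElem
  · simp; omega
  · intro i _ _
    simp only [List.getElem_take, List.getElem_drop, getElem_blockOf]
    push_cast
    ring_nf

lemma chunk_blockOf {L l r : ℕ} (p : ℤ) (h : (r + 1) * l ≤ L) :
    chunk l (blockOf x L p) r = blockOf x l (p + (r * l : ℕ)) :=
  take_drop_blockOf x p (by nlinarith)

lemma blockOf_shift (l : ℕ) (p : ℤ) : blockOf (shift x) l p = blockOf x l (p + 1) := by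
  simp only [blockOf, shift]
  congr 1
  funext i
  ring_nf

lemma measurableSet_blockOf (n : ℕ) (a : ℤ) (P : List Bool → Prop) :
    MeasurableSet {x : ℤ → Bool | P (blockOf x n a)} :=
  show MeasurableSet ((fun x : ℤ → Bool => fun i : Fin n => x (a + i)) ⁻¹' {v | P (List.ofFn v)})
  from (measurable_pi_lambda _ fun _ => measurable_pi_apply _) (Set.toFinite _).measurableSet

end Blocks

lemma not_permutedIdx_one (N : ℕ) : ¬ PermutedIdx N 1 := by
  rintro (h | ⟨m, hm, -, h⟩)
  · omega
  · nlinarith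

namespace Construction

variable (c : Construction)

lemma length_C_pos {j : ℕ} (hj : 1 ≤ j) : 0 < (c.C j).length := by
  rw [c.length_eq j hj]; exact Nseq_pos hj

lemma exists_perm_chunk_eq {j : ℕ} (hj : 1 ≤ j) {w : List Bool} (hw : w ∈ c.C (j + 1)) :
    ∃ τ : Equiv.Perm (Fin (c.C j).length), (∀ i : Fin (c.C j).length, (i : ℕ) = 0 → τ i = i) ∧
      ∀ i : Fin (c.C j).length, chunk (lseq c.l1 j) w i = (c.C j).get (τ i) := by
  obtain ⟨τ, hfix, -, rfl⟩ := (c.mem_succ j hj w).mp hw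
  refine ⟨τ, fun i hi => hfix i (by rw [hi]; exact not_permutedIdx_one _), fun i => ?_⟩
  rw [chunk_flatten]
  · simp
  · simp only [List.mem_ofFn, forall_exists_index]
    rintro _ i rfl
    exact c.wordLength j hj _ (List.get_mem _ _)
  · simp

lemma chunk_mem_of_mem_succ {j : ℕ} (hj : 1 ≤ j) {w : List Bool} (hw : w ∈ c.C (j + 1))
    {r : ℕ} (hr : r < Nseq c.l1 j) : chunk (lseq c.l1 j) w r ∈ c.C j := by
  obtain ⟨τ, -, hτ⟩ := c.exists_perm_chunk_eq hj hw
  rw [hτ ⟨r, by rwa [c.length_eq j hj]⟩]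
  exact List.get_mem _ _

/-- Since `1 ∉ P_j`, all words of `C (j+1)` begin with the same word of `C j`, which the
`Nodup` condition on `C j` forbids at any other block position. -/
lemma eq_zero_of_chunk_eq_chunk_zero {j : ℕ} (hj : 1 ≤ j) {w w' : List Bool}
    (hw : w ∈ c.C (j + 1)) (hw' : w' ∈ c.C (j + 1)) {r : ℕ} (hr : r < Nseq c.l1 j)
    (h : chunk (lseq c.l1 j) w r = chunk (lseq c.l1 j) w' 0) : r = 0 := by
  obtain ⟨τ, hτ0, hτ⟩ := c.exists_perm_chunk_eq hj hw
  obtain ⟨τ', hτ'0, hτ'⟩ := c.exists_perm_chunk_eq hj hw'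
  let i : Fin (c.C j).length := ⟨r, by rwa [c.length_eq j hj]⟩
  let i₀ : Fin (c.C j).length := ⟨0, c.length_C_pos hj⟩
  rw [hτ i, hτ' i₀, hτ'0 i₀ rfl, (c.nodup j hj).get_inj_iff, ← hτ0 i₀ rfl] at h
  exact congrArg Fin.val (τ.injective h)

lemma chunk_mem_of_le {J k : ℕ} (hJ : 1 ≤ J) (hJk : J ≤ k) {w : List Bool} (hw : w ∈ c.C k)
    {q : ℕ} (hq : (q + 1) * lseq c.l1 J ≤ lseq c.l1 k) : chunk (lseq c.l1 J) w q ∈ c.C J := by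
  have hl := lseq_pos c.hl1 hJ
  induction k, hJk using Nat.le_induction generalizing w q with
  | base =>
    obtain rfl : q = 0 := by nlinarith
    rw [chunk, zero_mul, List.drop_zero, List.take_of_length_le (c.wordLength J hJ w hw).le]
    exact hw
  | succ n hn ih =>
    have hn1 := hJ.trans hn
    obtain ⟨e, he⟩ := lseq_dvd (l1 := c.l1) hJ hn
    rw [lseq_succ hn1, he] at hq
    have he0 : 0 < e := Nat.pos_of_ne_zero (by rintro rfl; simp at hq; omega)
    have hqe : q < e * Nseq c.l1 n := by nlinarith
    rw [← Nat.div_add_mod' q e, ← chunk_chunk (Nat.mod_lt q he0)]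
    refine ih ?_ (by nlinarith [Nat.mod_lt q he0])
    rw [mul_comm, ← he]
    exact c.chunk_mem_of_mem_succ hn1 hw (Nat.div_lt_of_lt_mul hqe)

lemma exists_mem_infix_of_le {k K : ℕ} (hk : 1 ≤ k) (hkK : k ≤ K) {v w : List Bool}
    (hw : w ∈ c.C k) (hv : v <:+: w) : ∃ w' ∈ c.C K, v <:+: w' := by
  induction K, hkK using Nat.le_induction with
  | base => exact ⟨w, hw, hv⟩
  | succ n hn ih =>
    obtain ⟨w', hw', hvw'⟩ := ih
    obtain ⟨w'', hw''⟩ := List.exists_mem_of_length_pos (c.length_C_pos (j := n + 1) (by omega))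
    obtain ⟨τ, -, hτ⟩ := c.exists_perm_chunk_eq (hk.trans hn) hw''
    obtain ⟨i, rfl⟩ := List.get_of_mem hw'
    refine ⟨w'', hw'', hvw'.trans ?_⟩
    rw [← τ.apply_symm_apply i, ← hτ]
    exact chunk_infix

end Construction

-- the condition inside the infimum defining `Construction.tOffset`
def IsDecomp (c : Construction) (J t : ℕ) (x : ℤ → Bool) : Prop :=
  t < lseq c.l1 J ∧ ∀ m : ℤ, blockOf x (lseq c.l1 J) (m * lseq c.l1 J - t) ∈ c.C J

namespace IsDecomp

variable {c : Construction} {x : ℤ → Bool}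

lemma blockOf_mem_of_succ {J t : ℕ} (hJ : 1 ≤ J) (h : IsDecomp c (J + 1) t x) (M : ℤ) {r : ℕ}
    (hr : r < Nseq c.l1 J) :
    blockOf x (lseq c.l1 J) (M * lseq c.l1 (J + 1) - t + (r * lseq c.l1 J : ℕ)) ∈ c.C J := by
  rw [← chunk_blockOf x (L := lseq c.l1 (J + 1)) _ (by rw [lseq_succ hJ]; nlinarith)]
  exact c.chunk_mem_of_mem_succ hJ (h.2 M) hr

lemma mod {J t : ℕ} (hJ : 1 ≤ J) (h : IsDecomp c (J + 1) t x) :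
    IsDecomp c J (t % lseq c.l1 J) x := by
  have hl := lseq_pos c.hl1 hJ
  refine ⟨Nat.mod_lt _ hl, fun m => ?_⟩
  obtain ⟨M, r, hr, hMr⟩ := exists_eq_mul_add_lt (m + (t / lseq c.l1 J : ℕ)) (Nseq_pos hJ)
  convert h.blockOf_mem_of_succ hJ M hr using 2
  have ht : (lseq c.l1 J : ℤ) * (t / lseq c.l1 J : ℕ) + (t % lseq c.l1 J : ℕ) = t := by
    exact_mod_cast Nat.div_add_mod t (lseq c.l1 J)
  rw [lseq_succ hJ, Nat.cast_mul, Nat.cast_mul]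
  linear_combination (lseq c.l1 J : ℤ) * hMr - ht

lemma shift_iff {J t : ℕ} (ht : t + 1 < lseq c.l1 J) :
    IsDecomp c J (t + 1) (shift x) ↔ IsDecomp c J t x := by
  have hpos : ∀ m : ℤ, m * lseq c.l1 J - ((t + 1 : ℕ) : ℤ) + 1 = m * lseq c.l1 J - t := by
    intro m; push_cast; ring
  simp only [IsDecomp, blockOf_shift, hpos]
  exact ⟨fun h => ⟨by omega, h.2⟩, fun h => ⟨ht, h.2⟩⟩

end IsDecomp

namespace MarkerConstruction

variable (c : MarkerConstruction)

lemma three_le_lseq_one : 3 ≤ lseq c.l1 1 := by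
  obtain ⟨w, hw⟩ := List.exists_mem_of_length_pos (c.length_C_pos le_rfl)
  rw [← c.wordLength 1 le_rfl w hw]
  exact (c.marker_prefix w hw).length_le

lemma marker_of_blockOf_mem {x : ℤ → Bool} {p : ℤ} (h : blockOf x (lseq c.l1 1) p ∈ c.C 1) :
    x p = false ∧ x (p + 1) = false ∧ x (p + 2) = true := by
  have hpre := c.marker_prefix _ h
  have hx : ∀ (i : ℕ) (hi : i < 3), x (p + i) = [false, false, true][i] := fun i hi => by
    rw [hpre.getElem hi, getElem_blockOf]
  have h0 := hx 0 (by norm_num)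
  rw [Nat.cast_zero, add_zero] at h0
  exact ⟨h0, by exact_mod_cast hx 1 (by norm_num), by exact_mod_cast hx 2 (by norm_num)⟩

/-- A `00` inside a block is excluded by `marker_unique`; a `00` ending a block would be
followed by the `0` that starts the next one. -/
lemma dvd_of_marker {x : ℤ → Bool} {t : ℕ} (hd : IsDecomp c.toConstruction 1 t x) {p : ℤ}
    (h0 : x p = false) (h1 : x (p + 1) = false) (h2 : x (p + 2) = true) :
    (lseq c.l1 1 : ℤ) ∣ p + t := by
  have hl := c.three_le_lseq_one
  obtain ⟨M, r, hr, hMr⟩ := exists_eq_mul_add_lt (p + t) (N := lseq c.l1 1) (by omega)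
  rcases Nat.lt_or_ge (r + 1) (lseq c.l1 1) with hr1 | hr1
  · have hblock := hd.2 M
    have hlen : r + 1 < (blockOf x (lseq c.l1 1) (M * lseq c.l1 1 - t)).length := by simpa
    have hpair := pair_prefix_drop hlen
    have hp : M * (lseq c.l1 1 : ℤ) - t + r = p := by linear_combination -hMr
    simp only [getElem_blockOf, Nat.cast_add, Nat.cast_one, ← add_assoc, hp, h0, h1] at hpair
    obtain rfl := c.marker_unique _ hblock r hpair
    exact ⟨M, by rw [hMr]; push_cast; ring⟩
  · have hnext := (c.marker_of_blockOf_mem (hd.2 (M + 1))).2.1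
    have hp : (M + 1) * (lseq c.l1 1 : ℤ) - t + 1 = p + 2 := by
      have : (r : ℤ) + 1 = lseq c.l1 1 := by omega
      linear_combination -hMr - this
    rw [hp, h2] at hnext
    exact absurd hnext (by decide)

lemma isDecomp_one_unique {x : ℤ → Bool} {t t' : ℕ} (h : IsDecomp c.toConstruction 1 t x)
    (h' : IsDecomp c.toConstruction 1 t' x) : t = t' := by
  have hm := c.marker_of_blockOf_mem (h'.2 0)
  rw [zero_mul, zero_sub] at hm
  obtain ⟨h0, h1, h2⟩ := hm
  refine (eq_of_dvd_sub h'.1 h.1 ?_).symm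
  simpa [neg_add_eq_sub] using c.dvd_of_marker h h0 h1 h2

theorem isDecomp_unique {J : ℕ} (hJ : 1 ≤ J) {x : ℤ → Bool} {t t' : ℕ}
    (h : IsDecomp c.toConstruction J t x) (h' : IsDecomp c.toConstruction J t' x) : t = t' := by
  induction J, hJ using Nat.le_induction generalizing t t' with
  | base => exact c.isDecomp_one_unique h h'
  | succ n hn ih =>
    have hmod : t % lseq c.l1 n = t' % lseq c.l1 n := ih (h.mod hn) (h'.mod hn)
    obtain ⟨d, hd⟩ := Nat.ModEq.dvd hmod
    obtain ⟨M, r, hr, hMr⟩ := exists_eq_mul_add_lt d (Nseq_pos (l1 := c.l1) hn)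
    have hchunk := chunk_blockOf x (r := r) (M * lseq c.l1 (n + 1) - t')
      (by rw [lseq_succ hn]; nlinarith : (r + 1) * lseq c.l1 n ≤ lseq c.l1 (n + 1))
    have hhead := chunk_blockOf x (r := 0) (0 * lseq c.l1 (n + 1) - t)
      (by rw [lseq_succ hn]; nlinarith [Nseq_pos (l1 := c.l1) hn] :
        (0 + 1) * lseq c.l1 n ≤ lseq c.l1 (n + 1))
    have hsame : M * (lseq c.l1 (n + 1) : ℤ) - t' + (r * lseq c.l1 n : ℕ)
        = 0 * lseq c.l1 (n + 1) - t + (0 * lseq c.l1 n : ℕ) := by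
      rw [lseq_succ hn]; push_cast; linear_combination -hd - (lseq c.l1 n : ℤ) * hMr
    rw [hsame, ← hhead] at hchunk
    obtain rfl := c.eq_zero_of_chunk_eq_chunk_zero hn (h'.2 M) (h.2 0) hr hchunk
    refine eq_of_dvd_sub h.1 h'.1 ⟨M, ?_⟩
    rw [lseq_succ hn]; push_cast; linear_combination hd + (lseq c.l1 n : ℤ) * hMr

end MarkerConstruction

namespace Construction

variable (c : Construction)

lemma exists_offset_on_window {x : ℤ → Bool} (hx : x ∈ c.space) {J : ℕ} (hJ : 1 ≤ J) (K : ℕ) :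
    ∃ t < lseq c.l1 J, ∀ m : ℤ, m.natAbs ≤ K →
      blockOf x (lseq c.l1 J) (m * lseq c.l1 J - t) ∈ c.C J := by
  set l := lseq c.l1 J
  have hl : 0 < l := lseq_pos c.hl1 hJ
  obtain ⟨a, ha⟩ : ∃ a : ℤ, a = -((K + 1) * l : ℤ) := ⟨_, rfl⟩
  obtain ⟨j₀, hj₀, w₀, hw₀, hinf⟩ := hx a ((2 * K + 2) * l)
  obtain ⟨w, hw, pre, suf, hw_eq⟩ :=
    c.exists_mem_infix_of_le hj₀ (le_max_right J j₀) hw₀ (v := blockOf x _ a) hinf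
  have hS : ∀ q, (q + 1) * l ≤ (pre ++ blockOf x ((2 * K + 2) * l) a ++ suf).length →
      chunk l (pre ++ blockOf x ((2 * K + 2) * l) a ++ suf) q ∈ c.C J := fun q hq => by
    rw [hw_eq] at hq ⊢
    exact c.chunk_mem_of_le hJ (le_max_left J j₀) hw
      (by rwa [← c.wordLength _ (hJ.trans (le_max_left J j₀)) _ hw])
  refine ⟨pre.length % l, Nat.mod_lt _ hl, fun m hm => ?_⟩
  obtain ⟨e, he⟩ : ∃ e : ℕ, (e : ℤ) = m + K + 1 := ⟨(m + K + 1).toNat, by omega⟩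
  have he1 : 1 ≤ e := by omega
  have he2 : e ≤ 2 * K + 1 := by omega
  have hel : l ≤ e * l := Nat.le_mul_of_pos_left l he1
  have hmod := Nat.mod_lt pre.length hl
  have hfit : e * l - pre.length % l + l ≤ (2 * K + 2) * l := by
    have : e * l + l ≤ (2 * K + 2) * l := by nlinarith
    omega
  have hdvd : l ∣ pre.length + (e * l - pre.length % l) :=
    ⟨pre.length / l + e, by have := Nat.div_add_mod pre.length l; rw [mul_add, mul_comm l e]; omega⟩
  have := take_drop_of_forall_chunk (P := (· ∈ c.C J)) hS (by simpa using hfit) hdvd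
  rw [take_drop_blockOf x _ hfit] at this
  convert this using 2
  rw [Nat.cast_sub (hmod.le.trans hel)]
  push_cast
  linear_combination -(l : ℤ) * he - ha

lemma exists_isDecomp {x : ℤ → Bool} (hx : x ∈ c.space) {J : ℕ} (hJ : 1 ≤ J) :
    ∃ t, IsDecomp c J t x := by
  choose t ht hmem using c.exists_offset_on_window hx hJ
  obtain ⟨t₀, ht₀⟩ := Finite.exists_infinite_fiber fun K => (⟨t K, ht K⟩ : Fin (lseq c.l1 J))
  refine ⟨t₀, t₀.isLt, fun m => ?_⟩
  obtain ⟨K, hK, hKm⟩ := (Set.infinite_coe_iff.mp ht₀).exists_gt m.natAbs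
  have hK : t K = t₀ := congrArg Fin.val hK
  simpa [hK] using hmem K m hKm.le

lemma shift_mem_space_iff (x : ℤ → Bool) : shift x ∈ c.space ↔ x ∈ c.space := by
  have hwin : ∀ n a, blockOf (shift x) n (a - 1) = blockOf x n a := fun n a => by
    rw [blockOf_shift, sub_add_cancel]
  show (∀ a n, ∃ j, 1 ≤ j ∧ ∃ w ∈ c.C j, blockOf (shift x) n a <:+: w) ↔
    ∀ a n, ∃ j, 1 ≤ j ∧ ∃ w ∈ c.C j, blockOf x n a <:+: w
  refine ⟨fun h a n => ?_, fun h a n => ?_⟩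
  · rw [← hwin]; exact h (a - 1) n
  · rw [blockOf_shift]; exact h (a + 1) n

lemma two_le_Nseq (hne : c.space.Nonempty) {j : ℕ} (hj : 1 ≤ j) : 2 ≤ Nseq c.l1 j := by
  by_contra! h
  have hN : Nseq c.l1 j = 1 := by have := Nseq_pos (l1 := c.l1) hj; omega
  obtain ⟨x, hx⟩ := hne
  obtain ⟨k, hk, w, hw, hinf⟩ := hx 0 (lseq c.l1 j + 1)
  have hlen : lseq c.l1 j + 1 ≤ lseq c.l1 k := by
    simpa [c.wordLength k hk w hw] using hinf.length_le
  rcases le_total k j with hkj | hjk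
  · have := Nat.le_of_dvd (lseq_pos c.hl1 hj) (lseq_dvd hk hkj); omega
  · have := (lseq_eq_of_Nseq_eq_one hj hN hjk).1; omega

-- `{x ∈ X : t_J(x) = t}`, once offsets are known to be unique
def decompSet (J t : ℕ) : Set (ℤ → Bool) := {x | x ∈ c.space ∧ IsDecomp c J t x}

lemma measurableSet_space : MeasurableSet c.space := by
  have : c.space = ⋂ (a : ℤ) (n : ℕ), {x | ∃ j, 1 ≤ j ∧ ∃ w ∈ c.C j, blockOf x n a <:+: w} := by
    ext x; simp only [Set.mem_iInter]; rfl
  rw [this]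
  exact .iInter fun a => .iInter fun n =>
    measurableSet_blockOf n a fun v => ∃ j, 1 ≤ j ∧ ∃ w ∈ c.C j, v <:+: w

lemma measurableSet_decompSet (J t : ℕ) : MeasurableSet (c.decompSet J t) := by
  have : c.decompSet J t = c.space ∩ ({_x | t < lseq c.l1 J} ∩
      ⋂ m : ℤ, {x | blockOf x (lseq c.l1 J) (m * lseq c.l1 J - t) ∈ c.C J}) := by
    ext x; simp only [Set.mem_inter_iff, Set.mem_iInter]; rfl
  rw [this]
  exact c.measurableSet_space.inter
    (.inter (.const _) (.iInter fun m => measurableSet_blockOf _ _ _))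

end Construction

lemma measure_eq_of_preimage_succ {α : Type*} [MeasurableSpace α] {μ : Measure α} {f : α → α}
    (hf : MeasurePreserving f μ μ) {A : ℕ → Set α} (hA : ∀ t, MeasurableSet (A t)) {l : ℕ}
    (h : ∀ t, t + 1 < l → f ⁻¹' A (t + 1) = A t) {t : ℕ} (ht : t < l) : μ (A t) = μ (A 0) := by
  induction t with
  | zero => rfl
  | succ t ih => rw [← hf.measure_preimage (hA _).nullMeasurableSet, h t ht, ih (by omega)]

lemma Construction.preimage_shift_decompSet (c : Construction) {J t : ℕ}
    (ht : t + 1 < lseq c.l1 J) : shift ⁻¹' c.decompSet J (t + 1) = c.decompSet J t := by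
  ext x
  exact and_congr (c.shift_mem_space_iff x) (IsDecomp.shift_iff ht)

namespace MarkerConstruction

variable (c : MarkerConstruction)

lemma tOffset_eq {J t : ℕ} (hJ : 1 ≤ J) {x : ℤ → Bool} (h : IsDecomp c.toConstruction J t x) :
    c.tOffset J x = t := by
  have : {t' | IsDecomp c.toConstruction J t' x} = {t} :=
    Set.eq_singleton_iff_unique_mem.mpr ⟨h, fun t' h' => c.isDecomp_unique hJ h' h⟩
  exact (congrArg sInf this).trans (csInf_singleton t)

lemma pairwiseDisjoint_decompSet {J : ℕ} (hJ : 1 ≤ J) (T : Set ℕ) :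
    T.PairwiseDisjoint (c.decompSet J) :=
  fun _ _ _ _ hne => Set.disjoint_left.mpr fun _ hx hx' => hne (c.isDecomp_unique hJ hx.2 hx'.2)

lemma space_eq_biUnion_decompSet {J : ℕ} (hJ : 1 ≤ J) :
    c.space = ⋃ t ∈ Finset.range (lseq c.l1 J), c.decompSet J t := by
  ext x
  simp only [Set.mem_iUnion, Finset.mem_range, exists_prop]
  refine ⟨fun hx => ?_, fun ⟨_, _, hx, _⟩ => hx⟩
  obtain ⟨t, ht⟩ := c.exists_isDecomp hx hJ
  exact ⟨t, ht.1, hx, ht⟩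

lemma measure_decompSet {μ : Measure (ℤ → Bool)} (hμ : IsInvProbOn μ c.space) {J : ℕ}
    (hJ : 1 ≤ J) {t : ℕ} (ht : t < lseq c.l1 J) :
    μ (c.decompSet J t) = (lseq c.l1 J : ENNReal)⁻¹ := by
  obtain ⟨-, hshift, hspace⟩ := hμ
  have hA := c.measurableSet_decompSet J
  have hconst : ∀ t < lseq c.l1 J, μ (c.decompSet J t) = μ (c.decompSet J 0) := fun t ht =>
    measure_eq_of_preimage_succ hshift hA (fun _ => c.preimage_shift_decompSet) ht
  have hsum : (lseq c.l1 J : ENNReal) * μ (c.decompSet J 0) = 1 := by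
    rw [← hspace, c.space_eq_biUnion_decompSet hJ,
      measure_biUnion_finset (c.pairwiseDisjoint_decompSet hJ _) fun t _ => hA t,
      Finset.sum_congr rfl fun t ht => hconst t (Finset.mem_range.mp ht)]
    simp
  rw [hconst t ht]
  exact ENNReal.eq_inv_of_mul_eq_one_left (by rwa [mul_comm] at hsum)

lemma measure_biUnion_decompSet {μ : Measure (ℤ → Bool)} (hμ : IsInvProbOn μ c.space) {J : ℕ}
    (hJ : 1 ≤ J) {S : Finset ℕ} (hS : S ⊆ Finset.range (lseq c.l1 J)) :
    μ (⋃ t ∈ S, c.decompSet J t) = S.card * (lseq c.l1 J : ENNReal)⁻¹ := by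
  rw [measure_biUnion_finset (c.pairwiseDisjoint_decompSet hJ _)
      fun t _ => c.measurableSet_decompSet J t,
    Finset.sum_congr rfl fun t ht => c.measure_decompSet hμ hJ (Finset.mem_range.mp (hS ht))]
  simp

open Classical in
lemma setOf_tOffset_eq_biUnion {J : ℕ} (hJ : 1 ≤ J) (P : ℕ → Prop) :
    {x | x ∈ c.space ∧ P (c.tOffset J x)}
      = ⋃ t ∈ (Finset.range (lseq c.l1 J)).filter P, c.decompSet J t := by
  ext x
  simp only [Set.mem_iUnion, Finset.mem_filter, Finset.mem_range, exists_prop]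
  constructor
  · rintro ⟨hx, hP⟩
    obtain ⟨t, ht⟩ := c.exists_isDecomp hx hJ
    rw [c.tOffset_eq hJ ht] at hP
    exact ⟨t, ⟨ht.1, hP⟩, hx, ht⟩
  · rintro ⟨t, ⟨-, hP⟩, hx, ht⟩
    exact ⟨hx, by rwa [c.tOffset_eq hJ ht]⟩

end MarkerConstruction

open Classical in
lemma card_filter_permutedIdx {N : ℕ} (hN : 2 ≤ N) :
    ((Finset.range N).filter fun q => PermutedIdx N (q + 1)).card = Nat.sqrt N := by
  have hsqrt : 1 ≤ Nat.sqrt N := Nat.sqrt_pos.mpr (by omega)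
  have hsq : ∀ m, 2 ≤ m → 4 ≤ m ^ 2 := fun m hm => by nlinarith
  -- in 0-based indices `P` becomes `{1} ∪ {m² - 1 : 2 ≤ m ≤ ⌊√N⌋}`
  have hset : (Finset.range N).filter (fun q => PermutedIdx N (q + 1))
      = insert 1 ((Finset.Icc 2 (Nat.sqrt N)).image fun m => m ^ 2 - 1) := by
    ext q
    rw [Finset.mem_filter, Finset.mem_range, Finset.mem_insert, Finset.mem_image]
    simp only [Finset.mem_Icc, PermutedIdx]
    constructor
    · rintro ⟨-, h | ⟨m, hm2, hms, hmq⟩⟩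
      · omega
      · exact Or.inr ⟨m, ⟨hm2, hms⟩, by omega⟩
    · rintro (rfl | ⟨m, ⟨hm2, hms⟩, rfl⟩)
      · exact ⟨by omega, Or.inl rfl⟩
      · have hmN : m ^ 2 ≤ N := (Nat.pow_le_pow_left hms 2).trans (Nat.sqrt_le' N)
        have := hsq m hm2
        exact ⟨by omega, Or.inr ⟨m, hm2, hms, by omega⟩⟩
  rw [hset, Finset.card_insert_of_notMem, Finset.card_image_of_injOn, Nat.card_Icc]
  · omega
  · intro a ha b hb hab
    simp only [Finset.coe_Icc, Set.mem_Icc] at ha hb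
    have := hsq a ha.1
    have := hsq b hb.1
    exact Nat.pow_left_injective (by norm_num) (show a ^ 2 = b ^ 2 by simp at hab; omega)
  · simp only [Finset.mem_image, Finset.mem_Icc, not_exists, not_and]
    intro m hm h
    have := hsq m hm.1
    omega

lemma card_filter_range_mul_div {l N : ℕ} (hl : 0 < l) (P : ℕ → Prop) [DecidablePred P] :
    ((Finset.range (l * N)).filter fun t => P (t / l)).card
      = ((Finset.range N).filter P).card * l := by
  rw [← Finset.card_range l, ← Finset.card_product, Finset.card_range]
  refine Finset.card_nbij' (fun t => (t / l, t % l)) (fun p => p.1 * l + p.2) ?_ ?_ ?_ ?_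
  · intro t ht
    simp only [Finset.coe_filter, Finset.mem_range] at ht
    simp only [Finset.coe_product, Finset.coe_filter, Finset.mem_range, Set.mem_prod,
      Finset.coe_range, Set.mem_Iio]
    exact ⟨⟨Nat.div_lt_of_lt_mul ht.1, ht.2⟩, Nat.mod_lt _ hl⟩
  · rintro ⟨q, r⟩ hp
    simp only [Finset.coe_product, Finset.coe_filter, Finset.mem_range, Set.mem_prod,
      Finset.coe_range, Set.mem_Iio] at hp
    have hdiv : (q * l + r) / l = q := by
      rw [Nat.add_comm, Nat.add_mul_div_right _ _ hl, Nat.div_eq_of_lt hp.2, zero_add]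
    rw [Finset.mem_coe, Finset.mem_filter, Finset.mem_range, hdiv]
    exact ⟨by nlinarith [hp.1.1, hp.2], hp.1.2⟩
  · intro t _
    simp [Nat.div_add_mod']
  · rintro ⟨q, r⟩ hp
    simp only [Finset.coe_product, Finset.coe_range, Set.mem_prod, Set.mem_Iio] at hp
    simp [Nat.add_comm, Nat.add_mul_div_right _ _ hl, Nat.div_eq_of_lt hp.2,
      Nat.add_mul_mod_self_right, Nat.mod_eq_of_lt hp.2]

/-- Marker variant: the set `L_j` of points whose `C_j`-block containing
coordinate `0` sits at a permuted position has measure `⌊√N_j⌋ / N_j`. -/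
theorem statement11 (c : MarkerConstruction) (μ : Measure (ℤ → Bool))
    (hμ : IsInvProbOn μ c.toConstruction.space) (j : ℕ) (hj : 1 ≤ j) :
    μ { x | x ∈ c.toConstruction.space ∧
        PermutedIdx (Nseq c.l1 j)
          (c.toConstruction.tOffset (j + 1) x / lseq c.l1 j + 1) }
      = (Nat.sqrt (Nseq c.l1 j) : ENNReal) / (Nseq c.l1 j : ENNReal) := by
  classical
  have hne : c.space.Nonempty :=
    nonempty_of_measure_ne_zero (μ := μ) (by rw [hμ.2.2]; exact one_ne_zero)
  have hN := c.two_le_Nseq hne hj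
  have hl := lseq_pos c.hl1 hj
  rw [c.setOf_tOffset_eq_biUnion (J := j + 1) (by omega)
      fun t => PermutedIdx (Nseq c.l1 j) (t / lseq c.l1 j + 1),
    c.measure_biUnion_decompSet hμ (by omega) (Finset.filter_subset _ _), lseq_succ hj,
    card_filter_range_mul_div hl fun q => PermutedIdx (Nseq c.l1 j) (q + 1),
    card_filter_permutedIdx hN, ← div_eq_mul_inv]
  push_cast
  rw [mul_comm _ (lseq c.l1 j : ENNReal),
    ENNReal.mul_div_mul_left _ _ (by exact_mod_cast hl.ne') (ENNReal.natCast_ne_top _)]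

end EntDim
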